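/- Let Δ ≥ 2, let G be a connected infinite Δ-regular graph, and let 0 < q ≤ 1/2 and r > 0. Suppose (S_AB, S_B) is a blocking structure for (G, q, r) with S_AB ≠ ∅ and S_B ≠ V(G). Then 2q + Δr > 1, q > 1/(Δ+1), and r < q. -/

import Mathlib

namespace Contagion

open scoped BigOperators

/-- The three strategies in the contagion game. -/
inductive Strat
  | A | B | AB
deriving DecidableEq

/-- Pairwise payoff to a player using the first strategy against a neighbor
using the second strategy, in the contagion game with parameters `q, r`. -/
noncomputable def pairPayoff (q r : ℝ) : Strat → Strat → ℝ
  | .A, .A => 1 - q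
  | .A, .B => 0
  | .A, .AB => 1 - q
  | .B, .A => 0
  | .B, .B => q
  | .B, .AB => q
  | .AB, .A => 1 - q - r
  | .AB, .B => q - r
  | .AB, .AB => max q (1 - q) - r

variable {V : Type*}

/-- Total payoff to vertex `v` for playing strategy `s` against profile `σ`. -/
noncomputable def totalPayoff (G : SimpleGraph V) (q r : ℝ) (σ : V → Strat)
    (v : V) (s : Strat) : ℝ :=
  ∑ᶠ u ∈ G.neighborSet v, pairPayoff q r s (σ u)

/-- `s` is a best response of vertex `v` to the profile `σ`. -/
def IsBestResponse (G : SimpleGraph V) (q r : ℝ) (σ : V → Strat) (v : V) (s : Strat) : Prop :=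
  ∀ s' : Strat, totalPayoff G q r σ v s' ≤ totalPayoff G q r σ v s

/-- Strategy `A` becomes epidemic in the contagion game `(G, q, r)`:
there are a finite initial set `S₀` (playing `A`, everybody else playing `B`) and a
sequence `α` of vertices in which every vertex appears at least once, such that updating
at step `n` the vertex `α n` to a best response makes every vertex eventually adopt `A`. -/
def Epidemic (G : SimpleGraph V) (q r : ℝ) : Prop :=
  ∃ (S₀ : Set V) (α : ℕ → V) (σ : ℕ → V → Strat),
    S₀.Finite ∧
    Function.Surjective α ∧
    (∀ v ∈ S₀, σ 0 v = Strat.A) ∧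
    (∀ v ∉ S₀, σ 0 v = Strat.B) ∧
    (∀ n, IsBestResponse G q r (σ n) (α n) (σ (n + 1) (α n))) ∧
    (∀ n v, v ≠ α n → σ (n + 1) v = σ n v) ∧
    (∀ v, ∃ n, σ n v = Strat.A)

/-- The epidemic region `Ω_G ⊆ ℝ²` of `G`. -/
def epidemicRegion (G : SimpleGraph V) : Set (ℝ × ℝ) :=
  {p | 0 < p.1 ∧ p.1 < 1 ∧ 0 < p.2 ∧ Epidemic G p.1 p.2}

/-- `G` is `Δ`-regular: every vertex has exactly `Δ` neighbors. -/
def IsRegular (G : SimpleGraph V) (Δ : ℕ) : Prop :=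
  ∀ v, (G.neighborSet v).ncard = Δ

/-- The number of neighbors of `v` lying in the set `S`. -/
noncomputable def degIn (G : SimpleGraph V) (v : V) (S : Set V) : ℕ :=
  (G.neighborSet v ∩ S).ncard

/-- `RT Δ`: the infinite rooted tree in which the root (the empty list) has `Δ - 1`
children and every other vertex also has `Δ - 1` children (hence degree `Δ`). -/
def RT (Δ : ℕ) : SimpleGraph (List (Fin (Δ - 1))) :=
  SimpleGraph.fromRel (fun l l' => ∃ a : Fin (Δ - 1), l' = a :: l)

/-- `G` contains a subgraph isomorphic to `RT Δ`. -/
def HasRTCopy (Δ : ℕ) (G : SimpleGraph V) : Prop :=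
  ∃ f : List (Fin (Δ - 1)) → V,
    Function.Injective f ∧ ∀ x y, (RT Δ).Adj x y → G.Adj (f x) (f y)

/-- The thick half line `HL_Δ` (for even `Δ`), columns indexed by `ℕ` starting with the
first column `0`; `(k, i)` and `(l, j)` are adjacent exactly when `|k - l| = 1`. -/
def HL (Δ : ℕ) : SimpleGraph (ℕ × Fin (Δ / 2)) :=
  SimpleGraph.fromRel (fun x y => y.1 = x.1 + 1)

/-- The epidemic region of the infinite `Δ`-regular tree:
`{(q,r) : q,r > 0, r ≥ ((Δ-1)/Δ)q, q ≤ 1/Δ} ∪ {(q,r) : q,r > 0, 2q + Δr ≤ 1}`. -/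
def treeRegion (Δ : ℕ) : Set (ℝ × ℝ) :=
  {p | 0 < p.1 ∧ 0 < p.2 ∧ ((Δ : ℝ) - 1) / Δ * p.1 ≤ p.2 ∧ p.1 ≤ 1 / Δ} ∪
  {p | 0 < p.1 ∧ 0 < p.2 ∧ 2 * p.1 + Δ * p.2 ≤ 1}

/-- The epidemic region of the thick line `L_Δ`:
`{(q,r) : 0 < q ≤ 1/2, r ≥ q/2} ∪ {(q,r) : q,r > 0, r ≤ q/2, 2q + 2r ≤ 1}`. -/
def thickLineRegion : Set (ℝ × ℝ) :=
  {p | 0 < p.1 ∧ p.1 ≤ 1 / 2 ∧ p.1 / 2 ≤ p.2} ∪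
  {p | 0 < p.1 ∧ 0 < p.2 ∧ p.2 ≤ p.1 / 2 ∧ 2 * p.1 + 2 * p.2 ≤ 1}

/-- `(SAB, SB)` is a blocking structure for the contagion game `(G, q, r)`
on a `Δ`-regular graph `G`. -/
def IsBlockingStructure (G : SimpleGraph V) (Δ : ℕ) (q r : ℝ) (SAB SB : Set V) : Prop :=
  Disjoint SAB SB ∧ (SAB.Nonempty ∨ SB.Nonempty) ∧
  (∀ v ∈ SAB, r / q * Δ < (degIn G v SB : ℝ)) ∧
  ∀ v ∈ SB,
    (1 - q - r) * Δ < (1 - q) * (degIn G v SB : ℝ) + min q (1 - q) * (degIn G v SAB : ℝ) ∧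
    (1 - q) * Δ < (degIn G v SB : ℝ) + q * (degIn G v SAB : ℝ)

/-- The two strategies of the `A`-`B` coordination game. -/
inductive CStrat
  | A | B
deriving DecidableEq

/-- Pairwise payoff in the `A`-`B` coordination game `(G, q)`. -/
noncomputable def cPairPayoff (q : ℝ) : CStrat → CStrat → ℝ
  | .A, .A => 1 - q
  | .A, .B => 0
  | .B, .A => 0
  | .B, .B => q

/-- Total payoff to `v` for playing `s` against profile `σ` in the coordination game. -/
noncomputable def cTotalPayoff (G : SimpleGraph V) (q : ℝ) (σ : V → CStrat)
    (v : V) (s : CStrat) : ℝ :=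
  ∑ᶠ u ∈ G.neighborSet v, cPairPayoff q s (σ u)

/-- `s` is a best response of `v` to `σ` in the coordination game. -/
def CIsBestResponse (G : SimpleGraph V) (q : ℝ) (σ : V → CStrat) (v : V) (s : CStrat) : Prop :=
  ∀ s' : CStrat, cTotalPayoff G q σ v s' ≤ cTotalPayoff G q σ v s

/-- Strategy `A` becomes epidemic in the coordination game `(G, q)` starting from the
initial set `S₀`. -/
def CoordEpidemicFrom (G : SimpleGraph V) (q : ℝ) (S₀ : Set V) : Prop :=
  ∃ (α : ℕ → V) (σ : ℕ → V → CStrat),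
    Function.Surjective α ∧
    (∀ v ∈ S₀, σ 0 v = CStrat.A) ∧
    (∀ v ∉ S₀, σ 0 v = CStrat.B) ∧
    (∀ n, CIsBestResponse G q (σ n) (α n) (σ (n + 1) (α n))) ∧
    (∀ n v, v ≠ α n → σ (n + 1) v = σ n v) ∧
    (∀ v, ∃ n, σ n v = CStrat.A)

/-- Strategy `A` becomes epidemic in the coordination game `(G, q)`. -/
def CoordEpidemic (G : SimpleGraph V) (q : ℝ) : Prop :=
  ∃ S₀ : Set V, S₀.Finite ∧ CoordEpidemicFrom G q S₀

/-! A vertex of `S_AB` has more than `(r/q)Δ ≤ Δ` neighbours in `S_B`, which forces `r < q` and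
`S_B ≠ ∅`. As `G` is connected and `S_B ≠ V(G)`, some `v ∈ S_B` has a neighbour outside `S_B`, so
`deg_{S_B}(v) ≤ Δ - 1` and `deg_{S_B}(v) + deg_{S_AB}(v) ≤ Δ`. Feeding these bounds into the two
conditions on `S_B` at `v` (where `min(q, 1 - q) = q`) gives `2q + Δr > 1` and `q(Δ + 1) > 1`. -/

section Degrees

variable {G : SimpleGraph V} {Δ : ℕ}

theorem IsRegular.finite_neighborSet (hReg : IsRegular G Δ) (hΔ : Δ ≠ 0) (v : V) :
    (G.neighborSet v).Finite :=
  Set.finite_of_ncard_ne_zero (by rwa [hReg v])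

theorem IsRegular.degIn_add_degIn_le (hReg : IsRegular G Δ) (hΔ : Δ ≠ 0) (v : V)
    {S T : Set V} (hST : Disjoint S T) : degIn G v S + degIn G v T ≤ Δ := by
  have hfin := hReg.finite_neighborSet hΔ v
  rw [degIn, degIn, ← Set.ncard_union_eq (hST.mono Set.inter_subset_right Set.inter_subset_right)
    (hfin.inter_of_left _) (hfin.inter_of_left _), ← Set.inter_union_distrib_left, ← hReg v]
  exact Set.ncard_le_ncard Set.inter_subset_left hfin

theorem IsRegular.degIn_le (hReg : IsRegular G Δ) (hΔ : Δ ≠ 0) (v : V) (S : Set V) :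
    degIn G v S ≤ Δ :=
  hReg v ▸ Set.ncard_le_ncard Set.inter_subset_left (hReg.finite_neighborSet hΔ v)

theorem IsRegular.degIn_lt_of_adj_notMem (hReg : IsRegular G Δ) (hΔ : Δ ≠ 0) {v w : V}
    {S : Set V} (hvw : G.Adj v w) (hw : w ∉ S) : degIn G v S < Δ :=
  hReg v ▸ Set.ncard_lt_ncard ⟨Set.inter_subset_left, fun h => hw (h hvw).2⟩
    (hReg.finite_neighborSet hΔ v)

theorem IsRegular.mul_degIn_add_mul_degIn_le (hReg : IsRegular G Δ) (hΔ : Δ ≠ 0) {S T : Set V}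
    (hST : Disjoint S T) {v w : V} (hvw : G.Adj v w) (hw : w ∉ S) {q x : ℝ} (hq : 0 ≤ q)
    (hqx : q ≤ x) : x * degIn G v S + q * degIn G v T ≤ x * (Δ - 1) + q := by
  have hS : (degIn G v S : ℝ) + 1 ≤ Δ := by
    exact_mod_cast hReg.degIn_lt_of_adj_notMem hΔ hvw hw
  have hdeg : (degIn G v S : ℝ) + degIn G v T ≤ Δ := by
    exact_mod_cast hReg.degIn_add_degIn_le hΔ v hST
  calc x * degIn G v S + q * degIn G v T
      ≤ x * degIn G v S + q * (Δ - degIn G v S) := by gcongr; linarith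
    _ = (x - q) * degIn G v S + q * Δ := by ring
    _ ≤ (x - q) * (Δ - 1) + q * Δ := by gcongr; linarith
    _ = x * (Δ - 1) + q := by ring

theorem exists_adj_mem_notMem_of_connected {G : SimpleGraph V} (hConn : G.Connected) {S : Set V}
    (hS : S.Nonempty) (hS' : S ≠ Set.univ) : ∃ v ∈ S, ∃ w, G.Adj v w ∧ w ∉ S := by
  obtain ⟨u, hu⟩ := hS
  obtain ⟨w, hw⟩ := (Set.ne_univ_iff_exists_notMem S).1 hS'
  obtain ⟨d, -, hd, hd'⟩ := (hConn.preconnected u w).some.exists_boundary_dart S hu hw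
  exact ⟨d.fst, hd, d.snd, d.adj, hd'⟩

end Degrees

namespace IsBlockingStructure

variable {G : SimpleGraph V} {Δ : ℕ} {q r : ℝ} {SAB SB : Set V}

theorem nonempty_right_of_nonempty_left (hblock : IsBlockingStructure G Δ q r SAB SB)
    (hq : 0 ≤ q) (hr : 0 ≤ r) (hSAB : SAB.Nonempty) : SB.Nonempty := by
  obtain ⟨v, hv⟩ := hSAB
  have hdeg : 0 < (degIn G v SB : ℝ) :=
    lt_of_le_of_lt (by positivity) (hblock.2.2.1 v hv)
  obtain ⟨w, hw⟩ := Set.nonempty_of_ncard_ne_zero (Nat.cast_pos.1 hdeg).ne'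
  exact ⟨w, hw.2⟩

theorem lt_of_nonempty_left (hblock : IsBlockingStructure G Δ q r SAB SB)
    (hReg : IsRegular G Δ) (hΔ : Δ ≠ 0) (hq : 0 < q) (hSAB : SAB.Nonempty) : r < q := by
  obtain ⟨v, hv⟩ := hSAB
  have hle : (degIn G v SB : ℝ) ≤ 1 * Δ := by
    rw [one_mul]; exact_mod_cast hReg.degIn_le hΔ v SB
  have hlt : r / q < 1 :=
    lt_of_mul_lt_mul_right ((hblock.2.2.1 v hv).trans_le hle) (Nat.cast_nonneg Δ)
  exact (div_lt_one hq).1 hlt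

end IsBlockingStructure

theorem blocking_nonempty_SAB_constraints_general {V : Type*} (Δ : ℕ) (hΔ : 2 ≤ Δ)
    (G : SimpleGraph V) (hConn : G.Connected) (hReg : IsRegular G Δ)
    (q r : ℝ) (hq0 : 0 < q) (hq : q ≤ 1 / 2) (hr : 0 < r)
    (SAB SB : Set V) (hblock : IsBlockingStructure G Δ q r SAB SB)
    (hSAB : SAB.Nonempty) (hSB : SB ≠ Set.univ) :
    1 < 2 * q + Δ * r ∧ 1 / ((Δ : ℝ) + 1) < q ∧ r < q := by
  have hΔ0 : Δ ≠ 0 := by omega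
  obtain ⟨v, hv, w, hvw, hw⟩ := exists_adj_mem_notMem_of_connected hConn
    (hblock.nonempty_right_of_nonempty_left hq0.le hr.le hSAB) hSB
  obtain ⟨hB₁, hB₂⟩ := hblock.2.2.2 v hv
  rw [min_eq_left (by linarith : q ≤ 1 - q)] at hB₁
  have h₁ := hReg.mul_degIn_add_mul_degIn_le hΔ0 hblock.1.symm hvw hw hq0.le
    (by linarith : q ≤ 1 - q)
  have h₂ := hReg.mul_degIn_add_mul_degIn_le hΔ0 hblock.1.symm hvw hw hq0.le
    (by linarith : q ≤ 1)
  refine ⟨by linarith, ?_, hblock.lt_of_nonempty_left hReg hΔ0 hq0 hSAB⟩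
  rw [div_lt_iff₀ (by positivity)]
  linarith

/-- If `(S_AB, S_B)` is a blocking structure for `(G, q, r)` on a connected
infinite `Δ`-regular graph with `0 < q ≤ 1/2`, `r > 0`, `S_AB ≠ ∅` and `S_B ≠ V(G)`,
then `2q + Δr > 1`, `q > 1/(Δ+1)` and `r < q`. -/
theorem blocking_nonempty_SAB_constraints {V : Type*} (Δ : ℕ) (hΔ : 2 ≤ Δ)
    (G : SimpleGraph V) (hInf : Infinite V) (hConn : G.Connected) (hReg : IsRegular G Δ)
    (q r : ℝ) (hq0 : 0 < q) (hq : q ≤ 1 / 2) (hr : 0 < r)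
    (SAB SB : Set V) (hblock : IsBlockingStructure G Δ q r SAB SB)
    (hSAB : SAB.Nonempty) (hSB : SB ≠ Set.univ) :
    1 < 2 * q + Δ * r ∧ 1 / ((Δ : ℝ) + 1) < q ∧ r < q :=
  blocking_nonempty_SAB_constraints_general Δ hΔ G hConn hReg q r hq0 hq hr SAB SB hblock hSAB hSB

end Contagion
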